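/- For any two pseudo-differential operators A and B on a differential superalgebra V, the residue of the supercommutator Res([A,B]) lies in the image ∂V of the derivation, i.e. Res(AB - (-1)^{|A||B|} BA) is a total derivative. -/
import Mathlib


noncomputable section

/-- A differential superalgebra: a `ℤ/2`-graded associative unital `ℂ`-algebra,
supercommutative, with an even derivation `D`. -/
class DiffSuperAlg (V : Type*) extends Ring V, Algebra ℂ V where
  grading : ZMod 2 → Submodule ℂ V
  gradedAlgebra : GradedAlgebra grading
  D : V → V
  superComm : ∀ (i j : ZMod 2), ∀ a ∈ grading i, ∀ b ∈ grading j,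
      a * b = ((-1 : ℂ) ^ (i.val * j.val)) • (b * a)
  D_add : ∀ a b, D (a + b) = D a + D b
  D_smul : ∀ (c : ℂ) (a : V), D (c • a) = c • D a
  D_mul : ∀ a b, D (a * b) = D a * b + a * D b
  D_even : ∀ (i : ZMod 2), ∀ a ∈ grading i, D a ∈ grading i

namespace PDO

variable {V : Type*} [DiffSuperAlg V]

/-- Iterated derivation `∂ⁿ`. -/
def Dit (n : ℕ) : V → V := (DiffSuperAlg.D (V := V))^[n]

/-- Generalized binomial coefficient `C(k, n)` for `k ∈ ℤ`. -/
def cchoose (k : ℤ) (n : ℕ) : ℂ :=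
  (∏ i ∈ Finset.range n, ((k : ℂ) - (i : ℂ))) / (n.factorial : ℂ)

/-- Sign `(-1)^x` of a parity `x ∈ ℤ/2`. -/
def sgn (x : ZMod 2) : ℂ := (-1 : ℂ) ^ x.val

/-- A formal series `Σₖ (f k) ∂ᵏ` is an honest pseudo-differential operator when its
support is bounded above. -/
def IsPDO (f : ℤ → V) : Prop := ∃ N : ℤ, ∀ k : ℤ, N < k → f k = 0

/-- `f` is monic of order `N`. -/
def IsMonic (f : ℤ → V) (N : ℤ) : Prop :=
  f N = 1 ∧ ∀ k : ℤ, N < k → f k = 0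

/-- `f` is a differential operator of order at most `N`. -/
def IsDiffOpLE (f : ℤ → V) (N : ℕ) : Prop := ∀ k : ℤ, f k ≠ 0 → 0 ≤ k ∧ k ≤ (N : ℤ)

/-- All coefficients of `f` are homogeneous of parity `π`. -/
def IsHomog (f : ℤ → V) (π : ZMod 2) : Prop :=
  ∀ k : ℤ, f k ∈ DiffSuperAlg.grading (V := V) π

/-- The product of pseudo-differential operators, obtained from the rule
`∂ᵏ v = Σₙ C(k,n) v⁽ⁿ⁾ ∂^(k-n)`. -/
def pmul (f g : ℤ → V) : ℤ → V := fun m =>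
  ∑ᶠ (k : ℤ) (j : ℤ) (n : ℕ),
    if m = k + j - (n : ℤ) then cchoose k n • (f k * Dit n (g j)) else 0

/-- The identity operator. -/
def one : ℤ → V := fun m => if m = 0 then 1 else 0

/-- The operator `∂^e`. -/
def del (e : ℤ) : ℤ → V := fun m => if m = e then 1 else 0

/-- The adjoint `A*(∂) = Σₖ (-∂)ᵏ aₖ`, coefficientwise. -/
def adj (f : ℤ → V) : ℤ → V := fun m =>
  ∑ᶠ n : ℕ, ((-1 : ℂ) ^ (m + (n : ℤ)) * cchoose (m + n) n) • Dit n (f (m + n))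

/-- The residue `Res A = a₋₁`. -/
def res (f : ℤ → V) : V := f (-1)

/-- The differential part `A₊`. -/
def dplus (f : ℤ → V) : ℤ → V := fun k => if 0 ≤ k then f k else 0

/-- Coefficient of `z^m` in `A(z+∂)(B(z))`, where `(z+∂)⁻¹` is expanded as
`Σₙ (-1)ⁿ z^(-n-1) ∂ⁿ` (i.e. via the generalized binomial coefficients). -/
def symbolSub (f g : ℤ → V) : ℤ → V := fun m =>
  ∑ᶠ (k : ℤ) (n : ℕ), cchoose k n • (f k * Dit n (g (m - k + n)))

/-- Coefficientwise derivation on `V[λ]`. -/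
def Dp (P : Polynomial V) : Polynomial V :=
  P.sum fun n c => Polynomial.C (DiffSuperAlg.D c) * Polynomial.X ^ n

/-- Iterated coefficientwise derivation on `V[λ]`. -/
def DpIt (n : ℕ) : Polynomial V → Polynomial V := (Dp (V := V))^[n]

/-- Coefficient of `w^j` in `(w+λ+∂)ⁿ (G(w))`, where `G(w) = Σ_q g_q w^q`. -/
def expW (n : ℕ) (g : ℤ → V) (j : ℤ) : Polynomial V :=
  ∑ᶠ (m : ℕ) (α : ℕ), if m + α ≤ n then
    (((n.choose m) * ((n - m).choose α) : ℕ) : ℂ) •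
      ((Polynomial.X : Polynomial V) ^ (n - m - α) * Polynomial.C (Dit m (g (j - (α : ℤ)))))
  else 0

/-- Coefficient of `z^i w^j` in `A(z) ι_z(z-w-λ-∂)⁻¹ (B(w))`. -/
def iotaTermB (f g : ℤ → V) (i j : ℤ) : Polynomial V :=
  ∑ᶠ n : ℕ, Polynomial.C (f (i + n + 1)) * expW n g j

/-- `A(w+λ+∂)` applied to `P ∈ V[λ]`: coefficient of `w^j`. -/
def appW (f : ℤ → V) (P : Polynomial V) (j : ℤ) : Polynomial V :=
  ∑ᶠ (n : ℕ) (β : ℕ),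
    (cchoose (j + n + β) n * cchoose (j + β) β) •
      ((Polynomial.X : Polynomial V) ^ β * (Polynomial.C (f (j + n + β)) * DpIt n P))

/-- Symbol of the adjoint `A*` at `λ - z` (expanded for large `|z|`):
coefficient of `z^i`, as an element of `V[λ]`. -/
def adjSymb (g : ℤ → V) (i : ℤ) : Polynomial V :=
  ∑ᶠ β : ℕ, ((-1 : ℂ) ^ i * cchoose (i + β) β) •
    ((Polynomial.X : Polynomial V) ^ β * Polynomial.C (adj g (i + β)))

/-- Coefficient of `z^i w^j` in `A(w+λ+∂) ι_z(z-w-λ-∂)⁻¹ ((B)*(λ-z))`. -/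
def iotaTermA (f g : ℤ → V) (i j : ℤ) : Polynomial V :=
  ∑ᶠ n : ℕ, appW (fun k => f (k - n)) (adjSymb g (i + n + 1)) j

/-- Coefficient of `z^i w^j` of the right-hand side
`A(w+λ+∂) ι_z(z-w-λ-∂)⁻¹ (B*)(λ-z) - A(z) ι_z(z-w-λ-∂)⁻¹ B(w)`
of the super Adler identity, for the entries `f = A_{hj}` and `g = A_{ik}`. -/
def adlerRHS (f g : ℤ → V) (i j : ℤ) : Polynomial V :=
  iotaTermA f g i j - iotaTermB f g i j

/-- Coefficient of `w^j` in `A(w+λ)`. -/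
def symbLam (f : ℤ → V) (j : ℤ) : Polynomial V :=
  ∑ᶠ β : ℕ, cchoose (j + β) β •
    ((Polynomial.X : Polynomial V) ^ β * Polynomial.C (f (j + β)))

variable {I : Type*} [Fintype I] [DecidableEq I]

/-- The super Adler-type operator property of a matrix pseudo-differential operator,
with respect to a λ-bracket `Br` and the parity function `p` on the index set. -/
def IsSATO (p : I → ZMod 2) (Br : V → V → Polynomial V) (A : I → I → ℤ → V) : Prop :=
  ∀ i j h k : I, ∀ zp wp : ℤ,
    Br (A i j zp) (A h k wp) =
      sgn (p i * p j + p i * p h + p j * p h) • adlerRHS (A h j) (A i k) zp wp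

/-- Homogeneous component of parity `π` of an element of `V`. -/
def gpart (π : ZMod 2) (v : V) : V :=
  letI := DiffSuperAlg.gradedAlgebra (V := V)
  ((DirectSum.decompose (DiffSuperAlg.grading (V := V)) v) π : V)

/-- The `∘`-product `(a⊗v)∘(b⊗w) = (-1)^(|b||v|) ab⊗vw` on matrix pseudo-differential
operators. -/
def circMul (p : I → ZMod 2) (M N : I → I → ℤ → V) : I → I → ℤ → V :=
  fun i j m => ∑ t : I, ∑ π : ZMod 2,
    sgn ((p t + p j) * π) • pmul (fun k => gpart π (M i t k)) (N t j) m

/-- The `⋆`-product `(a⊗v)⋆(b⊗w) = (-1)^(|b||v|+|a||b|) ab⊗vw` on matrix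
pseudo-differential operators. -/
def starMul (p : I → ZMod 2) (M N : I → I → ℤ → V) : I → I → ℤ → V :=
  fun i j m => ∑ t : I, ∑ π : ZMod 2,
    sgn ((p t + p j) * π + (p i + p t) * (p t + p j)) •
      pmul (fun k => gpart π (M i t k)) (N t j) m

/-- The identity matrix operator `𝟙_I`. -/
def idMat : I → I → ℤ → V := fun i j m => if i = j ∧ m = 0 then 1 else 0

/-- `M` is a monic matrix (pseudo-)differential operator of order `N`. -/
def IsMonicMat (M : I → I → ℤ → V) (N : ℤ) : Prop :=
  (∀ i j : I, M i j N = if i = j then (1 : V) else 0) ∧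
  (∀ i j : I, ∀ k : ℤ, N < k → M i j k = 0)

/-- `∘`-powers of a matrix pseudo-differential operator. -/
def circPow (p : I → ZMod 2) (M : I → I → ℤ → V) : ℕ → I → I → ℤ → V
  | 0 => idMat
  | n + 1 => circMul p M (circPow p M n)

/-- Matrix-wise differential part. -/
def dplusMat (M : I → I → ℤ → V) : I → I → ℤ → V := fun i j => dplus (M i j)

/-- `Res str M`, the supertrace of the residue. -/
def strRes (p : I → ZMod 2) (M : I → I → ℤ → V) : V :=
  ∑ i : I, sgn (p i) • res (M i i)

/-- `{a_(λ+∂) c}_→ b`, i.e. `Σₙ (a₍ₙ₎c) (λ+∂)ⁿ b` for `P = {a_λ c}`. -/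
def lamShift (P : Polynomial V) (b : V) : Polynomial V :=
  ∑ᶠ (n : ℕ) (m : ℕ), if m ≤ n then ((n.choose m : ℕ) : ℂ) •
    ((Polynomial.X : Polynomial V) ^ (n - m) * Polynomial.C (P.coeff n * Dit m b)) else 0

/-- `{b_(-λ-∂) a}` computed from `P = {b_λ a}`. -/
def negLam (P : Polynomial V) : Polynomial V :=
  ∑ᶠ (n : ℕ) (m : ℕ), if m ≤ n then (((n.choose m : ℕ) : ℂ) * (-1 : ℂ) ^ n) •
    ((Polynomial.X : Polynomial V) ^ (n - m) * Polynomial.C (Dit m (P.coeff n))) else 0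

end PDO

/-- A λ-bracket on a differential superalgebra: even, bilinear, sesquilinear,
satisfying the left and right Leibniz rules. -/
structure LambdaBracket (V : Type*) [DiffSuperAlg V] where
  br : V → V → Polynomial V
  add_left : ∀ a b c : V, br (a + b) c = br a c + br b c
  add_right : ∀ a b c : V, br a (b + c) = br a b + br a c
  smul_left : ∀ (r : ℂ) (a b : V), br (r • a) b = r • br a b
  smul_right : ∀ (r : ℂ) (a b : V), br a (r • b) = r • br a b
  even : ∀ (i j : ZMod 2), ∀ a ∈ DiffSuperAlg.grading (V := V) i,
      ∀ b ∈ DiffSuperAlg.grading (V := V) j, ∀ n : ℕ,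
      (br a b).coeff n ∈ DiffSuperAlg.grading (V := V) (i + j)
  sesq_left : ∀ a b : V, br (DiffSuperAlg.D a) b = -(Polynomial.X * br a b)
  sesq_right : ∀ a b : V,
      br a (DiffSuperAlg.D b) = Polynomial.X * br a b + PDO.Dp (br a b)
  leibniz_left : ∀ (i j : ZMod 2), ∀ a ∈ DiffSuperAlg.grading (V := V) i,
      ∀ b ∈ DiffSuperAlg.grading (V := V) j, ∀ c : V,
      br a (b * c) = br a b * Polynomial.C c + PDO.sgn (i * j) • (Polynomial.C b * br a c)
  leibniz_right : ∀ (i j k : ZMod 2), ∀ a ∈ DiffSuperAlg.grading (V := V) i,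
      ∀ b ∈ DiffSuperAlg.grading (V := V) j, ∀ c ∈ DiffSuperAlg.grading (V := V) k,
      br (a * b) c =
        PDO.sgn (j * k) • PDO.lamShift (br a c) b +
        PDO.sgn (i * (j + k)) • PDO.lamShift (br b c) a

namespace PDO

variable {V : Type*} [DiffSuperAlg V]

/-- Skew-symmetry axiom: `{a_λ b} = -(-1)^(|a||b|) {b_(-λ-∂) a}`. -/
def SkewSymm (B : LambdaBracket V) : Prop :=
  ∀ (i j : ZMod 2), ∀ a ∈ DiffSuperAlg.grading (V := V) i,
    ∀ b ∈ DiffSuperAlg.grading (V := V) j,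
    B.br a b = -(sgn (i * j) • negLam (B.br b a))

/-- Coefficient of `λ^l μ^m` in `{{a_λ b}_(λ+μ) c}`. -/
def jacComp (B : LambdaBracket V) (a b c : V) (l m : ℕ) : V :=
  ∑ᶠ n : ℕ, if n ≤ l then
    (((l - n + m).choose m : ℕ) : ℂ) • (B.br ((B.br a b).coeff n) c).coeff (l - n + m)
  else 0

/-- Jacobi identity: `{a_λ {b_μ c}} = {{a_λ b}_(λ+μ) c} + (-1)^(|a||b|) {b_μ {a_λ c}}`,
written on the coefficient of `λ^l μ^m`. -/
def Jacobi (B : LambdaBracket V) : Prop :=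
  ∀ (i j : ZMod 2), ∀ a ∈ DiffSuperAlg.grading (V := V) i,
    ∀ b ∈ DiffSuperAlg.grading (V := V) j, ∀ c : V, ∀ l m : ℕ,
    (B.br a ((B.br b c).coeff m)).coeff l =
      jacComp B a b c l m + sgn (i * j) • (B.br b ((B.br a c).coeff l)).coeff m

/-- The family `u` differentially generates `V`. -/
def diffGen (u : Set V) : Prop :=
  Algebra.adjoin ℂ {x : V | ∃ v ∈ u, ∃ n : ℕ, x = Dit n v} = ⊤

end PDO

namespace PDO

variable {V : Type*} [DiffSuperAlg V]

-- auxiliary lemmas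

local notation "DD" => DiffSuperAlg.D (V := V)

lemma D_zero : DD (0 : V) = 0 := by
  have := DiffSuperAlg.D_smul (0 : ℂ) (0 : V)
  simpa using this

lemma Dit_zero (n : ℕ) : Dit n (0 : V) = 0 :=
  Function.iterate_fixed D_zero n

lemma Dit_succ (n : ℕ) (a : V) : Dit (n + 1) a = Dit n (DD a) :=
  Function.iterate_succ_apply _ n a

lemma Dit_succ' (n : ℕ) (a : V) : Dit (n + 1) a = DD (Dit n a) :=
  Function.iterate_succ_apply' _ n a

lemma Dit_mem (π : ZMod 2) (n : ℕ) (a : V) (h : a ∈ DiffSuperAlg.grading (V := V) π) :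
    Dit n a ∈ DiffSuperAlg.grading (V := V) π := by
  induction n with
  | zero => exact h
  | succ n ih => rw [Dit_succ']; exact DiffSuperAlg.D_even π _ ih

lemma range_zero : (0 : V) ∈ Set.range DD := ⟨0, D_zero⟩

lemma range_add {a b : V} (ha : a ∈ Set.range DD) (hb : b ∈ Set.range DD) :
    a + b ∈ Set.range DD := by
  obtain ⟨v, hv⟩ := ha; obtain ⟨w, hw⟩ := hb
  exact ⟨v + w, by rw [DiffSuperAlg.D_add, hv, hw]⟩

lemma range_smul (c : ℂ) {a : V} (ha : a ∈ Set.range DD) : c • a ∈ Set.range DD := by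
  obtain ⟨v, hv⟩ := ha
  exact ⟨c • v, by rw [DiffSuperAlg.D_smul, hv]⟩

lemma range_sub {a b : V} (ha : a ∈ Set.range DD) (hb : b ∈ Set.range DD) :
    a - b ∈ Set.range DD := by
  have := range_add ha (range_smul (-1 : ℂ) hb)
  simpa [sub_eq_add_neg] using this

lemma range_sum {ι : Type*} (s : Finset ι) (F : ι → V)
    (h : ∀ x ∈ s, F x ∈ Set.range DD) : (∑ x ∈ s, F x) ∈ Set.range DD :=
  Finset.sum_induction F (· ∈ Set.range DD) (fun _ _ => range_add) range_zero h

lemma key1 (n : ℕ) (a b : V) :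
    a * Dit n b - ((-1 : ℂ) ^ n) • (Dit n a * b) ∈ Set.range DD := by
  induction n generalizing a b with
  | zero => simp [Dit]; exact range_zero
  | succ n ih =>
    have h1 := ih a (DD b)
    obtain ⟨v, hv⟩ := h1
    refine ⟨v + (-1 : ℂ) ^ n • (Dit n a * b), ?_⟩
    rw [DiffSuperAlg.D_add, DiffSuperAlg.D_smul, hv, DiffSuperAlg.D_mul]
    rw [Dit_succ n b, Dit_succ' n a, pow_succ]
    module

lemma sgn_mul_eq (i j : ZMod 2) : sgn (i * j) = (-1 : ℂ) ^ (i.val * j.val) := by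
  rw [sgn, ZMod.val_mul, ← neg_one_pow_eq_pow_mod_two]

lemma sgn_sq (x : ZMod 2) : sgn x * sgn x = 1 := by
  rw [sgn, ← pow_add, ← two_mul, pow_mul]
  simp

lemma cchoose_reflect (k jj : ℤ) (n : ℕ) (h : jj = (n : ℤ) - 1 - k) :
    cchoose jj n = (-1 : ℂ) ^ n * cchoose k n := by
  unfold cchoose
  rw [← mul_div_assoc]
  congr 1
  rw [← Finset.prod_range_reflect (fun t => ((k : ℂ) - t)) n]
  rw [show ((-1 : ℂ) ^ n) = ∏ _t ∈ Finset.range n, (-1 : ℂ) by simp, ← Finset.prod_mul_distrib]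
  refine Finset.prod_congr rfl fun t ht => ?_
  rw [Finset.mem_range] at ht
  have h1 : ((n - 1 - t : ℕ) : ℂ) = (n : ℂ) - 1 - t := by
    push_cast [Nat.cast_sub (by omega : t ≤ n - 1), Nat.cast_sub (by omega : 1 ≤ n)]
    ring
  have h2 : (jj : ℂ) = (n : ℂ) - 1 - (k : ℂ) := by
    rw [h]; push_cast; ring
  rw [h1, h2]; ring

lemma pmul_eq_sum (f g : ℤ → V) (N m : ℤ)
    (hf : ∀ k, N < k → f k = 0) (hg : ∀ k, N < k → g k = 0) :
    pmul f g m = ∑ k ∈ Finset.Icc (m - N) N, ∑ jj ∈ Finset.Icc (m - N) N,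
      (if 0 ≤ k + jj - m then
        cchoose k (k + jj - m).toNat • (f k * Dit (k + jj - m).toNat (g jj)) else 0) := by
  set T : ℤ → ℤ → V := fun k jj => if 0 ≤ k + jj - m then
        cchoose k (k + jj - m).toNat • (f k * Dit (k + jj - m).toNat (g jj)) else 0 with hT
  have step1 : ∀ k jj : ℤ,
      (∑ᶠ n : ℕ, if m = k + jj - (n : ℤ) then cchoose k n • (f k * Dit n (g jj)) else 0)
        = T k jj := by
    intro k jj
    by_cases h : 0 ≤ k + jj - m
    · rw [finsum_eq_single _ (k + jj - m).toNat (fun n hn => if_neg (fun hmn => hn (by omega)))]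
      rw [hT]
      simp only [if_pos h]
      rw [if_pos (by omega)]
    · rw [hT]
      simp only [if_neg h]
      exact finsum_eq_zero_of_forall_eq_zero fun n => if_neg (by omega)
  have hTne : ∀ k jj : ℤ, T k jj ≠ 0 → f k ≠ 0 ∧ g jj ≠ 0 ∧ 0 ≤ k + jj - m := by
    intro k jj hne
    rw [hT] at hne
    by_cases h : 0 ≤ k + jj - m
    · simp only [if_pos h] at hne
      refine ⟨fun hf0 => hne ?_, fun hg0 => hne ?_, h⟩
      · rw [hf0, zero_mul, smul_zero]
      · rw [hg0, Dit_zero, mul_zero, smul_zero]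
    · simp only [if_neg h] at hne
      exact absurd rfl hne
  have step3 : ∀ k : ℤ, (∑ᶠ jj : ℤ, T k jj) = ∑ jj ∈ Finset.Icc (m - N) N, T k jj := by
    intro k
    refine finsum_eq_finset_sum_of_support_subset _ fun jj hjj => ?_
    obtain ⟨h1, h2, h3⟩ := hTne k jj hjj
    have hk : k ≤ N := by by_contra hc; exact h1 (hf k (by omega))
    have hjN : jj ≤ N := by by_contra hc; exact h2 (hg jj (by omega))
    simp only [Finset.coe_Icc, Set.mem_Icc]
    omega
  have step2 : pmul f g m = ∑ᶠ k : ℤ, ∑ᶠ jj : ℤ, T k jj := by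
    unfold pmul
    exact finsum_congr fun k => finsum_congr fun jj => step1 k jj
  rw [step2]
  have step4 : (∑ᶠ k : ℤ, ∑ᶠ jj : ℤ, T k jj)
      = ∑ k ∈ Finset.Icc (m - N) N, ∑ᶠ jj : ℤ, T k jj := by
    refine finsum_eq_finset_sum_of_support_subset _ fun k hk => ?_
    have hex : ∃ jj, T k jj ≠ 0 := by
      by_contra hc
      push_neg at hc
      exact hk (by simpa using finsum_eq_zero_of_forall_eq_zero hc)
    obtain ⟨jj, hjj⟩ := hex
    obtain ⟨h1, h2, h3⟩ := hTne k jj hjj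
    have hk' : k ≤ N := by by_contra hc; exact h1 (hf k (by omega))
    have hjN : jj ≤ N := by by_contra hc; exact h2 (hg jj (by omega))
    simp only [Finset.coe_Icc, Set.mem_Icc]
    omega
  rw [step4]
  exact Finset.sum_congr rfl fun k _ => step3 k


end PDO

/-- For pseudo-differential operators `A, B` on a differential
superalgebra `V`, homogeneous of parities `i, j`, the residue of the supercommutator
`Res(AB - (-1)^(|A||B|) BA)` is a total derivative, i.e. lies in `∂V`. -/
theorem residue_supercommutator (V : Type*) [DiffSuperAlg V] (f g : ℤ → V)
    (hf : PDO.IsPDO f) (hg : PDO.IsPDO g) (i j : ZMod 2)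
    (hfh : PDO.IsHomog f i) (hgh : PDO.IsHomog g j) :
    PDO.res (PDO.pmul f g) - PDO.sgn (i * j) • PDO.res (PDO.pmul g f)
      ∈ Set.range (DiffSuperAlg.D (V := V)) := by
  --PROOF
  obtain ⟨Nf, hNf⟩ := hf
  obtain ⟨Ng, hNg⟩ := hg
  set N : ℤ := max Nf Ng with hN
  have hf' : ∀ k, N < k → f k = 0 := fun k hk => hNf k (by omega)
  have hg' : ∀ k, N < k → g k = 0 := fun k hk => hNg k (by omega)
  show PDO.pmul f g (-1) - PDO.sgn (i * j) • PDO.pmul g f (-1) ∈ _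
  rw [PDO.pmul_eq_sum f g N (-1) hf' hg', PDO.pmul_eq_sum g f N (-1) hg' hf']
  rw [Finset.smul_sum]
  simp only [Finset.smul_sum]
  rw [show (∑ k ∈ Finset.Icc (-1 - N) N, ∑ jj ∈ Finset.Icc (-1 - N) N,
        PDO.sgn (i * j) • (if 0 ≤ k + jj - (-1) then
          PDO.cchoose k (k + jj - (-1)).toNat • (g k * PDO.Dit (k + jj - (-1)).toNat (f jj)) else 0))
      = ∑ k ∈ Finset.Icc (-1 - N) N, ∑ jj ∈ Finset.Icc (-1 - N) N,
        PDO.sgn (i * j) • (if 0 ≤ jj + k - (-1) then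
          PDO.cchoose jj (jj + k - (-1)).toNat • (g jj * PDO.Dit (jj + k - (-1)).toNat (f k)) else 0)
      from Finset.sum_comm]
  rw [← Finset.sum_sub_distrib]
  refine PDO.range_sum _ _ fun k _ => ?_
  rw [← Finset.sum_sub_distrib]
  refine PDO.range_sum _ _ fun jj _ => ?_
  by_cases h : (0 : ℤ) ≤ k + jj - (-1)
  · have hsw : (0 : ℤ) ≤ jj + k - (-1) := by omega
    rw [if_pos h, if_pos hsw]
    set n : ℕ := (k + jj - (-1)).toNat with hn
    have hn' : (jj + k - (-1)).toNat = n := by omega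
    rw [hn']
    rw [PDO.cchoose_reflect k jj n (by omega)]
    have hsc : PDO.Dit n (f k) * g jj = PDO.sgn (i * j) • (g jj * PDO.Dit n (f k)) := by
      rw [PDO.sgn_mul_eq]
      exact DiffSuperAlg.superComm i j _ (PDO.Dit_mem i n _ (hfh k)) _ (hgh jj)
    have hsc' : g jj * PDO.Dit n (f k) = PDO.sgn (i * j) • (PDO.Dit n (f k) * g jj) := by
      rw [hsc, smul_smul, PDO.sgn_sq, one_smul]
    have hred : PDO.sgn (i * j) • (((-1 : ℂ) ^ n * PDO.cchoose k n) • (g jj * PDO.Dit n (f k)))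
        = PDO.cchoose k n • ((-1 : ℂ) ^ n • (PDO.Dit n (f k) * g jj)) := by
      rw [hsc', smul_smul, smul_smul, smul_smul]
      congr 1
      linear_combination ((-1 : ℂ) ^ n * PDO.cchoose k n) * PDO.sgn_sq (i * j)
    rw [hred, ← smul_sub]
    exact PDO.range_smul _ (PDO.key1 n (f k) (g jj))
  · have hsw : ¬ (0 : ℤ) ≤ jj + k - (-1) := by omega
    rw [if_neg h, if_neg hsw]
    simpa using PDO.range_zero
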